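/- Let N be a group and α an automorphism of N restricting to the identity on a finite-index subgroup G ≤ N. Then for every f ∈ N and every h ∈ N, there is m ≥ 1 such that f⁻¹α(f) commutes with hᵐ. -/
import Mathlib


theorem commutes_with_power {N : Type*} [Group N] (G : Subgroup N) (hG : G.FiniteIndex)
    (α : N ≃* N) (hα : ∀ g ∈ G, α g = g) (f h : N) :
    ∃ m : ℕ, 1 ≤ m ∧ Commute (f⁻¹ * α f) (h ^ m) := by
  haveI := hG
  haveI := Subgroup.finiteIndex_normalCore G
  set K := G.normalCore with hK
  refine ⟨K.index, Nat.one_le_iff_ne_zero.mpr Subgroup.FiniteIndex.index_ne_zero, ?_⟩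
  have hhm : h ^ K.index ∈ K := Subgroup.pow_index_mem K h
  have hconj : f * h ^ K.index * f⁻¹ ∈ K := G.normalCore_normal.conj_mem _ hhm f
  have hle := G.normalCore_le
  have e1 : α (f * h ^ K.index * f⁻¹) = f * h ^ K.index * f⁻¹ := hα _ (hle hconj)
  have e2 : α (h ^ K.index) = h ^ K.index := hα _ (hle hhm)
  have e3 : α f * h ^ K.index * (α f)⁻¹ = f * h ^ K.index * f⁻¹ := by
    have := e1
    rw [map_mul, map_mul, map_inv, e2] at this
    exact this
  have : f⁻¹ * α f * h ^ K.index = h ^ K.index * (f⁻¹ * α f) := by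
    have := congrArg (fun x => f⁻¹ * x * α f) e3
    simpa [mul_assoc] using this
  exact this
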